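/- Let (B,[·,·]) be a bracket algebra lift of a Lie algebra L over R_k, and let ⟨·,·⟩ ∈ Λ²(L̄, ad) be an alternating bilinear form on the residue-field reduction L̄. Define a new bracket [x,y]' = [x,y] + ψ(⟨λ(x),λ(y)⟩), where λ : B → L̄ is reduction mod π and ψ : L̄ → π^k B is the inverse of χ. Then the induced Jacobiator 3-forms satisfy J' = J − d⟨·,·⟩ in Λ³(L̄, ad). In particular J and J' are cohomologous. -/

import Mathlib

open Pointwise

/-- `Rmod R π m` is the quotient ring `R/π^m R`. -/
abbrev Rmod (R : Type) [CommRing R] (π : R) (m : ℕ) : Type :=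
  R ⧸ Ideal.span {π ^ m}

section Setup

variable (R : Type) [CommRing R] (π : R) (k : ℕ)
variable (B : Type) [AddCommGroup B] [Module (Rmod R π (k + 1)) B]

/-- The image of `π` in `R_{k+1}`. -/
noncomputable abbrev pbar : Rmod R π (k + 1) := Ideal.Quotient.mk _ π

/-- The submodule `π^k B` of `B`. -/
noncomputable abbrev pikB : Submodule (Rmod R π (k + 1)) B :=
  (pbar R π k) ^ k • (⊤ : Submodule (Rmod R π (k + 1)) B)

/-- The submodule `π B` of `B`. -/
noncomputable abbrev piB : Submodule (Rmod R π (k + 1)) B :=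
  (pbar R π k) • (⊤ : Submodule (Rmod R π (k + 1)) B)

/-- `L = B/π^k B`, the reduction of `B` to a module over `R_k`. -/
noncomputable abbrev Lred := B ⧸ pikB R π k B

/-- `L̄ = B/πB`, the reduction of `B` to a vector space over the residue field. -/
noncomputable abbrev Lbar := B ⧸ piB R π k B

/-- The reduction map `mod : B → L = B/π^k B`. -/
noncomputable abbrev modk : B →ₗ[Rmod R π (k + 1)] Lred R π k B :=
  (pikB R π k B).mkQ

/-- The reduction map `λ : B → L̄ = B/πB`. -/
noncomputable abbrev lam : B →ₗ[Rmod R π (k + 1)] Lbar R π k B :=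
  (piB R π k B).mkQ

/-- `ψ : L̄ → B`, the map sending `x mod πB` to `π^k x`; its (corestriction to `π^k B`)
is the inverse of the canonical isomorphism `χ : π^k B → L̄`. -/
noncomputable def psi : Lbar R π k B →ₗ[Rmod R π (k + 1)] B :=
  Submodule.liftQ _ ((pbar R π k) ^ k • (LinearMap.id : B →ₗ[Rmod R π (k + 1)] B))
    (by
      intro x hx
      rw [← SetLike.mem_coe, Submodule.coe_pointwise_smul, Set.mem_smul_set] at hx
      obtain ⟨y, -, rfl⟩ := hx
      have h0 : (pbar R π k) ^ k * pbar R π k = 0 := by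
        rw [← pow_succ, ← map_pow, Ideal.Quotient.eq_zero_iff_mem]
        exact Ideal.mem_span_singleton_self _
      simp only [LinearMap.mem_ker, LinearMap.smul_apply, LinearMap.id_apply, smul_smul]
      rw [h0, zero_smul])

@[simp] theorem psi_apply (x : B) :
    psi R π k B (lam R π k B x) = ((pbar R π k) ^ k) • x := rfl

end Setup


/-!
Because `k ≥ 1`, `λ ∘ ψ = 0`, and `[ψ u, w] = ψ [u, λ w]`. Hence
`[[x,y]',z]' = [[x,y],z] + ψ([⟨λx,λy⟩,λz] + ⟨[λx,λy],λz⟩)`, and by antisymmetry the cyclic sum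
of the correction terms is `-ψ(d⟨·,·⟩)`. Finally `ψ` is injective: `B` is free over `R_{k+1}`, and
in `R_{k+1}` the equation `π^k c = 0` forces `π ∣ c`.
-/

theorem mem_smul_top_of_smul_eq_zero {A M : Type*} [CommRing A] [AddCommGroup M] [Module A M]
    [Module.Free A M] {a p : A} (hdvd : ∀ c, a * c = 0 → p ∣ c) {w : M} (hw : a • w = 0) :
    w ∈ p • (⊤ : Submodule A M) := by
  let b := Module.Free.chooseBasis A M
  choose s hs using fun i => hdvd (b.repr w i) (by simpa using congrArg (b.repr · i) hw)
  have hw_eq : w = p • ∑ i ∈ (b.repr w).support, s i • b i := by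
    conv_lhs => rw [← b.linearCombination_repr w]
    rw [Finsupp.linearCombination_apply, Finsupp.sum, Finset.smul_sum]
    exact Finset.sum_congr rfl fun i _ => by rw [smul_smul, ← hs i]
  rw [hw_eq]
  exact Submodule.smul_mem_pointwise_smul _ _ _ Submodule.mem_top

theorem pbar_dvd_of_pbar_pow_mul_eq_zero {R : Type} [CommRing R] [IsDomain R] {π : R}
    (hπ : π ≠ 0) {k : ℕ} {c : Rmod R π (k + 1)} (h : pbar R π k ^ k * c = 0) :
    pbar R π k ∣ c := by
  obtain ⟨r, rfl⟩ := Ideal.Quotient.mk_surjective c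
  rw [← map_pow, ← map_mul, Ideal.Quotient.eq_zero_iff_mem, Ideal.mem_span_singleton] at h
  obtain ⟨d, hd⟩ := h
  refine ⟨Ideal.Quotient.mk _ d, ?_⟩
  rw [← map_mul]
  congr 1
  exact mul_left_cancel₀ (pow_ne_zero k hπ) (by rw [hd]; ring)

section Reduction

variable {R : Type} [CommRing R] {π : R} {k : ℕ}
variable {B : Type} [AddCommGroup B] [Module (Rmod R π (k + 1)) B]

theorem psi_injective [IsDomain R] [Module.Free (Rmod R π (k + 1)) B] (hπ : π ≠ 0) :
    Function.Injective (psi R π k B) := by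
  rw [injective_iff_map_eq_zero]
  intro u hu
  obtain ⟨w, rfl⟩ := Submodule.mkQ_surjective _ u
  exact (Submodule.Quotient.mk_eq_zero _).mpr
    (mem_smul_top_of_smul_eq_zero (fun _ => pbar_dvd_of_pbar_pow_mul_eq_zero hπ) hu)

theorem pbar_smul_lbar (v : Lbar R π k B) : pbar R π k • v = 0 := by
  obtain ⟨a, rfl⟩ := Submodule.mkQ_surjective _ v
  rw [← map_smul]
  exact (Submodule.Quotient.mk_eq_zero _).mpr
    (Submodule.smul_mem_pointwise_smul a _ _ Submodule.mem_top)

theorem lam_psi (hk : 1 ≤ k) (u : Lbar R π k B) : lam R π k B (psi R π k B u) = 0 := by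
  obtain ⟨a, rfl⟩ := Submodule.mkQ_surjective _ u
  have hpow : pbar R π k ^ k = pbar R π k ^ (k - 1) * pbar R π k := by
    rw [← pow_succ, Nat.sub_add_cancel hk]
  rw [psi_apply, map_smul, hpow, mul_smul, pbar_smul_lbar, smul_zero]

variable {br : B →ₗ[Rmod R π (k + 1)] B →ₗ[Rmod R π (k + 1)] B}
  {brb : Lbar R π k B →ₗ[Rmod R π (k + 1)] Lbar R π k B →ₗ[Rmod R π (k + 1)] Lbar R π k B}

theorem isAlt_of_lam_bracket (halt : br.IsAlt)
    (hbrb : ∀ x y : B, lam R π k B (br x y) = brb (lam R π k B x) (lam R π k B y)) :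
    brb.IsAlt := by
  intro u
  obtain ⟨a, rfl⟩ := Submodule.mkQ_surjective _ u
  rw [← hbrb, halt, map_zero]

theorem bracket_psi_left
    (hbrb : ∀ x y : B, lam R π k B (br x y) = brb (lam R π k B x) (lam R π k B y))
    (u : Lbar R π k B) (w : B) :
    br (psi R π k B u) w = psi R π k B (brb u (lam R π k B w)) := by
  obtain ⟨a, rfl⟩ := Submodule.mkQ_surjective _ u
  rw [psi_apply, map_smul, LinearMap.smul_apply, ← hbrb, psi_apply]

theorem deformed_bracket_bracket (hk : 1 ≤ k)
    (hbrb : ∀ x y : B, lam R π k B (br x y) = brb (lam R π k B x) (lam R π k B y))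
    {form : Lbar R π k B →ₗ[Rmod R π (k + 1)] Lbar R π k B →ₗ[Rmod R π (k + 1)] Lbar R π k B}
    {br' : B →ₗ[Rmod R π (k + 1)] B →ₗ[Rmod R π (k + 1)] B}
    (hbr' : ∀ x y : B, br' x y = br x y + psi R π k B (form (lam R π k B x) (lam R π k B y)))
    (x y z : B) :
    br' (br' x y) z = br (br x y) z + psi R π k B
      (brb (form (lam R π k B x) (lam R π k B y)) (lam R π k B z)
        + form (brb (lam R π k B x) (lam R π k B y)) (lam R π k B z)) := by
  rw [hbr' (br' x y) z, hbr' x y]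
  simp only [map_add, LinearMap.add_apply, bracket_psi_left hbrb, lam_psi hk, hbrb, add_zero]
  abel

end Reduction

section Cochains

variable {A V : Type*} [CommRing A] [AddCommGroup V] [Module A V]

def jacobiator (br : V →ₗ[A] V →ₗ[A] V) (x y z : V) : V :=
  br (br x y) z + br (br y z) x + br (br z x) y

/-- `d form` for the Chevalley–Eilenberg differential `d` with coefficients in the adjoint
representation of `(V, brb)`. -/
def adCoboundary₂ (brb form : V →ₗ[A] V →ₗ[A] V) (x y z : V) : V :=
  brb x (form y z) - brb y (form x z) + brb z (form x y)
    - form (brb x y) z + form (brb x z) y - form (brb y z) x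

theorem cyclic_sum_eq_neg_adCoboundary₂ {brb form : V →ₗ[A] V →ₗ[A] V} (hbrb : brb.IsAlt)
    (hform : form.IsAlt) (x y z : V) :
    (brb (form x y) z + form (brb x y) z) + (brb (form y z) x + form (brb y z) x)
      + (brb (form z x) y + form (brb z x) y) = -adCoboundary₂ brb form x y z := by
  rw [adCoboundary₂, ← hbrb.neg (form y z) x, ← hform.neg z x, map_neg, hbrb.neg y,
    ← hbrb.neg (form x y) z, ← hbrb.neg z x, map_neg, LinearMap.neg_apply]
  abel

end Cochains

theorem jacobiator_deformed {R : Type} [CommRing R] {π : R} {k : ℕ} (hk : 1 ≤ k)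
    {B : Type} [AddCommGroup B] [Module (Rmod R π (k + 1)) B]
    {br br' : B →ₗ[Rmod R π (k + 1)] B →ₗ[Rmod R π (k + 1)] B}
    {brb form : Lbar R π k B →ₗ[Rmod R π (k + 1)] Lbar R π k B →ₗ[Rmod R π (k + 1)] Lbar R π k B}
    (halt : br.IsAlt) (hform : form.IsAlt)
    (hbrb : ∀ x y : B, lam R π k B (br x y) = brb (lam R π k B x) (lam R π k B y))
    (hbr' : ∀ x y : B, br' x y = br x y + psi R π k B (form (lam R π k B x) (lam R π k B y)))
    (x y z : B) :
    jacobiator br' x y z = jacobiator br x y z -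
      psi R π k B (adCoboundary₂ brb form (lam R π k B x) (lam R π k B y) (lam R π k B z)) := by
  rw [sub_eq_add_neg, ← map_neg,
    ← cyclic_sum_eq_neg_adCoboundary₂ (isAlt_of_lam_bracket halt hbrb) hform]
  simp only [jacobiator, deformed_bracket_bracket hk hbrb hbr', map_add]
  abel

theorem stmt_7_general (R : Type) [CommRing R] [IsDomain R]
    (π : R) (hπ : Irreducible π) (k : ℕ) (hk : 1 ≤ k)
    (B : Type) [AddCommGroup B] [Module (Rmod R π (k + 1)) B]
    [Module.Free (Rmod R π (k + 1)) B]
    (br : B →ₗ[Rmod R π (k + 1)] B →ₗ[Rmod R π (k + 1)] B)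
    (halt : ∀ v, br v v = 0)
    (brb : Lbar R π k B →ₗ[Rmod R π (k + 1)] Lbar R π k B →ₗ[Rmod R π (k + 1)] Lbar R π k B)
    (hbrb : ∀ x y : B, lam R π k B (br x y) = brb (lam R π k B x) (lam R π k B y))
    (J : Lbar R π k B →ₗ[Rmod R π (k + 1)] Lbar R π k B →ₗ[Rmod R π (k + 1)]
      Lbar R π k B →ₗ[Rmod R π (k + 1)] Lbar R π k B)
    (hJ : ∀ x y z : B, psi R π k B (J (lam R π k B x) (lam R π k B y) (lam R π k B z)) =
      br (br x y) z + br (br y z) x + br (br z x) y)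
    (form : Lbar R π k B →ₗ[Rmod R π (k + 1)] Lbar R π k B →ₗ[Rmod R π (k + 1)] Lbar R π k B)
    (hformalt : ∀ v, form v v = 0)
    (br' : B →ₗ[Rmod R π (k + 1)] B →ₗ[Rmod R π (k + 1)] B)
    (hbr' : ∀ x y : B, br' x y = br x y + psi R π k B (form (lam R π k B x) (lam R π k B y)))
    (J' : Lbar R π k B →ₗ[Rmod R π (k + 1)] Lbar R π k B →ₗ[Rmod R π (k + 1)]
      Lbar R π k B →ₗ[Rmod R π (k + 1)] Lbar R π k B)
    (hJ' : ∀ x y z : B, psi R π k B (J' (lam R π k B x) (lam R π k B y) (lam R π k B z)) =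
      br' (br' x y) z + br' (br' y z) x + br' (br' z x) y)
    :
    ∀ x y z : Lbar R π k B,
      J' x y z = J x y z -
        (brb x (form y z) - brb y (form x z) + brb z (form x y)
          - form (brb x y) z + form (brb x z) y - form (brb y z) x) := by
  intro x y z
  obtain ⟨a, rfl⟩ := Submodule.mkQ_surjective _ x
  obtain ⟨b, rfl⟩ := Submodule.mkQ_surjective _ y
  obtain ⟨c, rfl⟩ := Submodule.mkQ_surjective _ z
  apply psi_injective hπ.ne_zero
  rw [map_sub, hJ', hJ]
  exact jacobiator_deformed hk halt hformalt hbrb hbr' a b c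

/-- If `[x,y]' = [x,y] + ψ(⟨λ(x),λ(y)⟩)` for an alternating bilinear form
`⟨·,·⟩ ∈ Λ²(L̄, ad)`, then the induced Jacobiator 3-forms satisfy `J' = J − d⟨·,·⟩` in
`Λ³(L̄, ad)`; in particular `J` and `J'` are cohomologous. -/
theorem stmt_7 (R : Type) [CommRing R] [IsDomain R] [IsDiscreteValuationRing R]
    (π : R) (hπ : Irreducible π) (k : ℕ) (hk : 1 ≤ k)
    (B : Type) [AddCommGroup B] [Module (Rmod R π (k + 1)) B]
    [Module.Free (Rmod R π (k + 1)) B] [Module.Finite (Rmod R π (k + 1)) B]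
    (br : B →ₗ[Rmod R π (k + 1)] B →ₗ[Rmod R π (k + 1)] B)
    (halt : ∀ v, br v v = 0)
    (brL : Lred R π k B →ₗ[Rmod R π (k + 1)] Lred R π k B →ₗ[Rmod R π (k + 1)] Lred R π k B)
    (hlift : ∀ x y : B, modk R π k B (br x y) = brL (modk R π k B x) (modk R π k B y))
    (hjacL : ∀ x y z : Lred R π k B, brL (brL x y) z + brL (brL y z) x + brL (brL z x) y = 0)
    (brb : Lbar R π k B →ₗ[Rmod R π (k + 1)] Lbar R π k B →ₗ[Rmod R π (k + 1)] Lbar R π k B)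
    (hbrb : ∀ x y : B, lam R π k B (br x y) = brb (lam R π k B x) (lam R π k B y))
    (J : Lbar R π k B →ₗ[Rmod R π (k + 1)] Lbar R π k B →ₗ[Rmod R π (k + 1)]
      Lbar R π k B →ₗ[Rmod R π (k + 1)] Lbar R π k B)
    (hJ : ∀ x y z : B, psi R π k B (J (lam R π k B x) (lam R π k B y) (lam R π k B z)) =
      br (br x y) z + br (br y z) x + br (br z x) y)
    (form : Lbar R π k B →ₗ[Rmod R π (k + 1)] Lbar R π k B →ₗ[Rmod R π (k + 1)] Lbar R π k B)
    (hformalt : ∀ v, form v v = 0)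
    (br' : B →ₗ[Rmod R π (k + 1)] B →ₗ[Rmod R π (k + 1)] B)
    (hbr' : ∀ x y : B, br' x y = br x y + psi R π k B (form (lam R π k B x) (lam R π k B y)))
    (J' : Lbar R π k B →ₗ[Rmod R π (k + 1)] Lbar R π k B →ₗ[Rmod R π (k + 1)]
      Lbar R π k B →ₗ[Rmod R π (k + 1)] Lbar R π k B)
    (hJ' : ∀ x y z : B, psi R π k B (J' (lam R π k B x) (lam R π k B y) (lam R π k B z)) =
      br' (br' x y) z + br' (br' y z) x + br' (br' z x) y)
    :
    ∀ x y z : Lbar R π k B,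
      J' x y z = J x y z -
        (brb x (form y z) - brb y (form x z) + brb z (form x y)
          - form (brb x y) z + form (brb x z) y - form (brb y z) x) :=
  stmt_7_general R π hπ k hk B br halt brb hbrb J hJ form hformalt br' hbr' J' hJ'
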